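/- Let f : ℚ[u,v]² → ℚ[u,v]/(u³−27v²) be the ℚ[u,v]-linear map sending (f,g) to the class of 3u²g + 54vf. Then the kernel of f equals the ℚ[u,v]-span of (−3v, 2u) and (3u², −54v), and these two elements are ℚ[u,v]-linearly independent, so the kernel is free of rank 2. -/

import Mathlib

open MvPolynomial

noncomputable section

abbrev P : Type := MvPolynomial (Fin 2) ℚ

def u : P := X 0
def v : P := X 1

/-- The ideal `(u³ − 27v²)` of `ℚ[u,v]`. -/
def I : Ideal P := Ideal.span {u ^ 3 - 27 * v ^ 2}

/-- The `ℚ[u,v]`-linear map `(f, g) ↦ 3u²g + 54vf`. -/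
def g : P × P →ₗ[P] P where
  toFun fg := 3 * u ^ 2 * fg.2 + 54 * v * fg.1
  map_add' x y := by simp; ring
  map_smul' c x := by simp [smul_eq_mul]; ring

/-- The `ℚ[u,v]`-linear map `(f, g) ↦ 3u²g + 54vf mod (u³ − 27v²)`. -/
def f : P × P →ₗ[P] P ⧸ I := I.mkQ.comp g

lemma u_ne_zero : (u : P) ≠ 0 := X_ne_zero 0

lemma v_ne_zero : (v : P) ≠ 0 := X_ne_zero 1

lemma prime_u : Prime (u : P) := by
  rw [u, ← MulEquiv.prime_iff (finSuccEquiv ℚ 1).toMulEquiv]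
  have : (finSuccEquiv ℚ 1).toMulEquiv (X 0) = Polynomial.X := finSuccEquiv_X_zero
  rw [this]
  exact Polynomial.prime_X

lemma u_not_dvd_v : ¬ (u : P) ∣ v := by
  rintro ⟨c, hc⟩
  have := congrArg (eval fun i : Fin 2 => if i = 0 then (0 : ℚ) else 1) hc
  simp [u, v] at this

lemma u_not_dvd_18 : ¬ (u : P) ∣ 18 := by
  rintro ⟨c, hc⟩
  have := congrArg (eval fun i : Fin 2 => if i = 0 then (0 : ℚ) else 1) hc
  simp [u, v] at this

lemma u_dvd_aux {k : P} (hk : (u : P) ∣ 18 * v * k) : u ∣ k := by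
  rw [mul_assoc] at hk
  rcases (prime_u.dvd_mul).mp hk with h1 | h2
  · exact absurd h1 u_not_dvd_18
  · exact ((prime_u.dvd_mul).mp h2).resolve_left u_not_dvd_v

lemma d_ne_zero : (u ^ 3 - 27 * v ^ 2 : P) ≠ 0 := by
  intro h
  have := congrArg (eval fun i : Fin 2 => if i = 0 then (1 : ℚ) else 0) h
  simp [u, v] at this

/-- The kernel of `f : ℚ[u,v]² → ℚ[u,v]/(u³−27v²)`, `(f,g) ↦ 3u²g + 54vf`, equals the
`ℚ[u,v]`-span of `(−3v, 2u)` and `(3u², −54v)`, and these two elements are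
`ℚ[u,v]`-linearly independent, so the kernel is free of rank 2. -/
theorem stmt_17 :
    LinearMap.ker f =
      Submodule.span P {((-3 * v, 2 * u) : P × P), (3 * u ^ 2, -54 * v)} ∧
    LinearIndependent P ![((-3 * v, 2 * u) : P × P), (3 * u ^ 2, -54 * v)] := by
  constructor
  · apply le_antisymm
    · rintro ⟨a, b⟩ hx
      have hx' : 3 * u ^ 2 * b + 54 * v * a ∈ I := by
        have : I.mkQ (3 * u ^ 2 * b + 54 * v * a) = 0 := hx
        rwa [Submodule.mkQ_apply, Submodule.Quotient.mk_eq_zero] at this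
      obtain ⟨h, hh⟩ := Ideal.mem_span_singleton'.mp hx'
      -- hh : h * (u^3 - 27*v^2) = 3*u^2*b + 54*v*a
      have hFG : u * (u * (6 * b - 2 * h * u)) = -(18 * v * (6 * a + 3 * h * v)) := by
        linear_combination -2 * hh
      obtain ⟨q, hq⟩ : (u : P) ∣ 6 * a + 3 * h * v := by
        apply u_dvd_aux
        rw [← dvd_neg, ← hFG]
        exact Dvd.intro _ rfl
      have hG : u * (6 * b - 2 * h * u) = -(18 * v * q) := by
        apply mul_left_cancel₀ u_ne_zero
        rw [hq] at hFG
        linear_combination hFG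
      obtain ⟨p, hp⟩ : (u : P) ∣ q := by
        apply u_dvd_aux
        rw [← dvd_neg, ← hG]
        exact Dvd.intro _ rfl
      have hF : 6 * a + 3 * h * v = u ^ 2 * p := by
        rw [hq, hp]; ring
      have hG' : 6 * b - 2 * h * u = -(18 * v * p) := by
        apply mul_left_cancel₀ u_ne_zero
        rw [hp] at hG
        linear_combination hG
      have mem18 : ((18 : ℚ) • ((a, b) : P × P)) ∈
          Submodule.span P {((-3 * v, 2 * u) : P × P), (3 * u ^ 2, -54 * v)} := by
        rw [show ((18 : ℚ) • ((a, b) : P × P)) = ((18 * a, 18 * b) : P × P) by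
          rw [Prod.smul_mk, smul_eq_C_mul, smul_eq_C_mul, map_ofNat]]
        rw [Submodule.mem_span_pair]
        refine ⟨3 * h, p, ?_⟩
        refine Prod.ext ?_ ?_ <;>
          simp only [Prod.smul_mk, Prod.fst_add, Prod.snd_add, smul_eq_mul]
        · linear_combination -3 * hF
        · linear_combination -3 * hG'
      have := Submodule.smul_of_tower_mem _ ((1 : ℚ)/18) mem18
      rwa [smul_smul, show ((1:ℚ)/18) * 18 = 1 by norm_num, one_smul] at this
    · rw [Submodule.span_le]
      rintro x hx
      rcases Set.mem_insert_iff.mp hx with rfl | hx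
      · rw [SetLike.mem_coe, LinearMap.mem_ker]
        show I.mkQ (3 * u ^ 2 * (2 * u) + 54 * v * (-3 * v)) = 0
        rw [Submodule.mkQ_apply, Submodule.Quotient.mk_eq_zero]
        exact Ideal.mem_span_singleton'.mpr ⟨6, by ring⟩
      · rw [Set.mem_singleton_iff] at hx
        subst hx
        rw [SetLike.mem_coe, LinearMap.mem_ker]
        show I.mkQ (3 * u ^ 2 * (-54 * v) + 54 * v * (3 * u ^ 2)) = 0
        rw [show (3 * u ^ 2 * (-54 * v) + 54 * v * (3 * u ^ 2) : P) = 0 by ring]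
        simp
  · rw [LinearIndependent.pair_iff]
    intro s t hst
    have e1 : s * (-3 * v) + t * (3 * u ^ 2) = 0 := congrArg Prod.fst hst
    have e2 : s * (2 * u) + t * (-54 * v) = 0 := congrArg Prod.snd hst
    have ht0 : t * (u ^ 3 - 27 * v ^ 2) * 6 = 0 := by
      linear_combination 2 * u * e1 + 3 * v * e2
    have ht : t = 0 := by
      rcases mul_eq_zero.mp ht0 with h | h
      · rcases mul_eq_zero.mp h with h' | h'
        · exact h'
        · exact absurd h' d_ne_zero
      · exact absurd h (by norm_num)
    subst ht
    refine ⟨?_, rfl⟩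
    have e1' : s * v * (-3) = 0 := by linear_combination e1
    rcases mul_eq_zero.mp e1' with h | h
    · rcases mul_eq_zero.mp h with h' | h'
      · exact h'
      · exact absurd h' v_ne_zero
    · exact absurd h (by norm_num)
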